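/- arXiv:2011.01205 — 3 statements merged into one kernel-verified Lean document; each statement's English description precedes it below -/
import Mathlib

section
/- Let m ≥ 1 and let 0 = w_0 ≤ w_1 ≤ w_2 ≤ … ≤ w_m be real numbers. Then Σ_{j=1}^m (w_j − w_{j−1})·sqrt(m+1−j) ≤ sqrt(Σ_{j=1}^m w_j²) · (ln m + 1). -/
/-- Abel summation with `w 0 = 0`. -/
lemma abel_telescope (w a : ℕ → ℝ) (hw0 : w 0 = 0) (n : ℕ) :
    ∑ j ∈ Finset.Icc 1 n, (w j - w (j - 1)) * a j
      = (∑ j ∈ Finset.Icc 1 n, w j * (a j - a (j + 1))) + w n * a (n + 1) := by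
  induction n with
  | zero => simp [hw0]
  | succ n ih =>
      rw [Finset.sum_Icc_succ_top (by omega), Finset.sum_Icc_succ_top (by omega), ih]
      simp only [Nat.add_sub_cancel]
      ring

/-- **Telescoping estimate.**
For `m ≥ 1` and `0 = w₀ ≤ w₁ ≤ … ≤ w_m`,
`Σ_{j=1}^m (w_j − w_{j−1})·√(m+1−j) ≤ sqrt(Σ_{j=1}^m w_j²) · (ln m + 1)`. -/
theorem telescoping_sqrt_estimate
    (m : ℕ) (hm : 1 ≤ m) (w : ℕ → ℝ)
    (hw0 : w 0 = 0)
    (hmono : ∀ j < m, w j ≤ w (j + 1)) :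
    ∑ j ∈ Finset.Icc 1 m, (w j - w (j - 1)) * Real.sqrt ((m : ℝ) + 1 - j)
      ≤ Real.sqrt (∑ j ∈ Finset.Icc 1 m, (w j) ^ 2) * (Real.log m + 1) := by
  have hwnn : ∀ j, j ≤ m → 0 ≤ w j := by
    intro j hj
    induction j with
    | zero => simp [hw0]
    | succ k ih => exact (ih (by omega)).trans (hmono k (by omega))
  set a : ℕ → ℝ := fun j => Real.sqrt ((m : ℝ) + 1 - j) with ha
  have ham : a (m + 1) = 0 := by
    simp only [ha]
    push_cast
    rw [show (m : ℝ) + 1 - ((m : ℝ) + 1) = 0 by ring, Real.sqrt_zero]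
  rw [abel_telescope w a hw0 m, ham, mul_zero, add_zero]
  set b : ℕ → ℝ := fun j => (Real.sqrt ((m : ℝ) + 1 - j))⁻¹ with hb
  have hstep : ∀ j ∈ Finset.Icc 1 m, w j * (a j - a (j + 1)) ≤ w j * b j := by
    intro j hj
    rw [Finset.mem_Icc] at hj
    have hjm : (j : ℝ) ≤ m := by exact_mod_cast hj.2
    have hx : (1 : ℝ) ≤ (m : ℝ) + 1 - j := by linarith
    refine mul_le_mul_of_nonneg_left ?_ (hwnn j hj.2)
    have hs : 0 < Real.sqrt ((m : ℝ) + 1 - j) := Real.sqrt_pos.mpr (by linarith)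
    have haj1 : a (j + 1) = Real.sqrt ((m : ℝ) + 1 - j - 1) := by
      simp only [ha]
      congr 1
      push_cast
      ring
    have key : (a j - a (j + 1)) * Real.sqrt ((m : ℝ) + 1 - j) ≤ 1 := by
      have h1 : Real.sqrt ((m : ℝ) + 1 - j) * Real.sqrt ((m : ℝ) + 1 - j)
          = (m : ℝ) + 1 - j := Real.mul_self_sqrt (by linarith)
      have h2 : (m : ℝ) + 1 - j - 1
          ≤ Real.sqrt ((m : ℝ) + 1 - j - 1) * Real.sqrt ((m : ℝ) + 1 - j) := by
        calc (m : ℝ) + 1 - j - 1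
            = Real.sqrt ((m : ℝ) + 1 - j - 1) * Real.sqrt ((m : ℝ) + 1 - j - 1) :=
              (Real.mul_self_sqrt (by linarith)).symm
          _ ≤ _ := mul_le_mul_of_nonneg_left (Real.sqrt_le_sqrt (by linarith))
              (Real.sqrt_nonneg _)
      rw [haj1, sub_mul, h1]
      linarith
    simp only [hb, inv_eq_one_div]
    rw [le_div_iff₀ hs]
    exact key
  refine (Finset.sum_le_sum hstep).trans ?_
  refine (Real.sum_mul_le_sqrt_mul_sqrt _ w b).trans ?_
  refine mul_le_mul_of_nonneg_left ?_ (Real.sqrt_nonneg _)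
  -- √(Σ b²) ≤ log m + 1
  have hbsum : ∑ j ∈ Finset.Icc 1 m, b j ^ 2 = ∑ k ∈ Finset.Icc 1 m, ((k : ℝ))⁻¹ := by
    rw [Finset.sum_nbij' (i := fun j => m + 1 - j) (j := fun k => m + 1 - k)]
    · intro j hj; rw [Finset.mem_Icc] at hj ⊢; omega
    · intro j hj; rw [Finset.mem_Icc] at hj ⊢; omega
    · intro j hj; rw [Finset.mem_Icc] at hj; omega
    · intro j hj; rw [Finset.mem_Icc] at hj; omega
    · intro j hj
      rw [Finset.mem_Icc] at hj
      have hc : ((m + 1 - j : ℕ) : ℝ) = (m : ℝ) + 1 - j := by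
        have : j ≤ m + 1 := by omega
        push_cast [Nat.cast_sub this]
        ring
      have hx : (0 : ℝ) < (m : ℝ) + 1 - j := by
        have : (j : ℝ) ≤ m := by exact_mod_cast hj.2
        linarith
      rw [hc, hb]
      simp only
      rw [← Real.sqrt_inv, Real.sq_sqrt (by positivity)]
  have hharm : ∑ k ∈ Finset.Icc 1 m, ((k : ℝ))⁻¹ ≤ Real.log m + 1 := by
    have := harmonic_le_one_add_log m
    have heq : ((harmonic m : ℚ) : ℝ) = ∑ k ∈ Finset.Icc 1 m, ((k : ℝ))⁻¹ := by
      rw [harmonic_eq_sum_Icc]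
      push_cast
      rfl
    linarith [heq ▸ this]
  have hlog : 0 ≤ Real.log m := Real.log_nonneg (by exact_mod_cast hm)
  calc Real.sqrt (∑ j ∈ Finset.Icc 1 m, b j ^ 2)
      ≤ Real.sqrt ((Real.log m + 1) ^ 2) := by
        refine Real.sqrt_le_sqrt ?_
        rw [hbsum]
        nlinarith
    _ = Real.log m + 1 := Real.sqrt_sq (by linarith)
end

section
/- Let H be a nonempty set, m ≥ 1, let ℓ_1,…,ℓ_m : H → ℝ be bounded functions, and let 0 = w_0 ≤ w_1 ≤ … ≤ w_m be real numbers. Let σ = (σ_1,…,σ_m) be uniform on {−1,1}^m. Then E_σ[ sup_{h∈H} Σ_{i=1}^m σ_i w_i ℓ_i(h) ] ≤ Σ_{j=1}^m (w_j − w_{j−1}) · E_σ[ sup_{h∈H} Σ_{i=j}^m σ_i ℓ_i(h) ]. -/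
open Finset


/-- **Weighted-sample decomposition of the Rademacher average.**
For a nonempty class `H`, bounded functions `ℓ₁,…,ℓ_m : H → ℝ` and sorted weights
`0 = w₀ ≤ w₁ ≤ … ≤ w_m`, with `σ` uniform on `{−1,1}^m`
(indexed so that `σ i` is the sign of data point `i+1`),
`E_σ[sup_h Σ_{i=1}^m σ_i w_i ℓ_i(h)]
  ≤ Σ_{j=1}^m (w_j − w_{j−1}) · E_σ[sup_h Σ_{i=j}^m σ_i ℓ_i(h)]`. -/
theorem weighted_rademacher_decomposition
    {H : Type*} [Nonempty H] (m : ℕ) (hm : 1 ≤ m)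
    (ℓ : ℕ → H → ℝ) (hbdd : ∀ i, ∃ C, ∀ h, |ℓ i h| ≤ C)
    (w : ℕ → ℝ) (hw0 : w 0 = 0) (hmono : ∀ j < m, w j ≤ w (j + 1)) :
    ((2 : ℝ) ^ m)⁻¹ *
        ∑ σ ∈ Fintype.piFinset (fun _ : Fin m => ({-1, 1} : Finset ℝ)),
          ⨆ h : H, ∑ i : Fin m, σ i * w ((i : ℕ) + 1) * ℓ ((i : ℕ) + 1) h
      ≤ ∑ j ∈ Finset.Icc 1 m, (w j - w (j - 1)) *
          (((2 : ℝ) ^ m)⁻¹ *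
            ∑ σ ∈ Fintype.piFinset (fun _ : Fin m => ({-1, 1} : Finset ℝ)),
              ⨆ h : H, ∑ i ∈ Finset.univ.filter (fun i : Fin m => j ≤ (i : ℕ) + 1),
                σ i * ℓ ((i : ℕ) + 1) h) := by
  classical
  obtain ⟨C, hC⟩ : ∃ C : ℕ → ℝ, ∀ i h, |ℓ i h| ≤ C i :=
    ⟨fun i => (hbdd i).choose, fun i => (hbdd i).choose_spec⟩
  set P := Fintype.piFinset (fun _ : Fin m => ({-1, 1} : Finset ℝ)) with hP
  have hσ1 : ∀ σ ∈ P, ∀ i, |σ i| = 1 := by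
    intro σ hσ i
    have := Fintype.mem_piFinset.1 hσ i
    simp only [mem_insert, mem_singleton] at this
    rcases this with h | h <;> simp [h]
  have hbdd' : ∀ (σ : Fin m → ℝ), (∀ i, |σ i| = 1) → ∀ s : Finset (Fin m),
      BddAbove (Set.range fun h : H => ∑ i ∈ s, σ i * ℓ ((i : ℕ) + 1) h) := by
    intro σ hσ s
    refine ⟨∑ i ∈ s, C ((i : ℕ) + 1), ?_⟩
    rintro x ⟨h, rfl⟩
    apply Finset.sum_le_sum
    intro i _
    calc σ i * ℓ ((i : ℕ) + 1) h ≤ |σ i * ℓ ((i : ℕ) + 1) h| := le_abs_self _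
      _ = |σ i| * |ℓ ((i : ℕ) + 1) h| := abs_mul _ _
      _ = |ℓ ((i : ℕ) + 1) h| := by rw [hσ i, one_mul]
      _ ≤ C ((i : ℕ) + 1) := hC _ _
  have hcnn : ∀ j ∈ Icc 1 m, (0 : ℝ) ≤ w j - w (j - 1) := by
    intro j hj
    simp only [mem_Icc] at hj
    have h1 := hmono (j - 1) (by omega)
    have h2 : j - 1 + 1 = j := by omega
    rw [h2] at h1
    linarith
  have htel : ∀ n, w n = ∑ j ∈ Icc 1 n, (w j - w (j - 1)) := by
    intro n
    induction n with
    | zero => simp [hw0]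
    | succ k ih =>
      rw [Finset.sum_Icc_succ_top (by omega), ← ih]
      simp
  have key : ∀ (σ : Fin m → ℝ) (h : H),
      (∑ i : Fin m, σ i * w ((i : ℕ) + 1) * ℓ ((i : ℕ) + 1) h)
        = ∑ j ∈ Icc 1 m, (w j - w (j - 1)) *
            ∑ i ∈ Finset.univ.filter (fun i : Fin m => j ≤ (i : ℕ) + 1),
              σ i * ℓ ((i : ℕ) + 1) h := by
    intro σ h
    have step : ∀ i : Fin m, σ i * w ((i : ℕ) + 1) * ℓ ((i : ℕ) + 1) h
        = ∑ j ∈ Icc 1 m, (if j ≤ (i : ℕ) + 1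
            then (w j - w (j - 1)) * (σ i * ℓ ((i : ℕ) + 1) h) else 0) := by
      intro i
      rw [← Finset.sum_filter]
      have hfe : (Icc 1 m).filter (fun j => j ≤ (i : ℕ) + 1) = Icc 1 ((i : ℕ) + 1) := by
        ext j
        have := i.isLt
        simp only [mem_filter, mem_Icc]
        omega
      rw [hfe, ← Finset.sum_mul, ← htel]
      ring
    calc (∑ i : Fin m, σ i * w ((i : ℕ) + 1) * ℓ ((i : ℕ) + 1) h)
        = ∑ i : Fin m, ∑ j ∈ Icc 1 m, (if j ≤ (i : ℕ) + 1
            then (w j - w (j - 1)) * (σ i * ℓ ((i : ℕ) + 1) h) else 0) :=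
          Finset.sum_congr rfl fun i _ => step i
      _ = ∑ j ∈ Icc 1 m, ∑ i : Fin m, (if j ≤ (i : ℕ) + 1
            then (w j - w (j - 1)) * (σ i * ℓ ((i : ℕ) + 1) h) else 0) := Finset.sum_comm
      _ = ∑ j ∈ Icc 1 m, (w j - w (j - 1)) *
            ∑ i ∈ Finset.univ.filter (fun i : Fin m => j ≤ (i : ℕ) + 1),
              σ i * ℓ ((i : ℕ) + 1) h := by
          refine Finset.sum_congr rfl fun j _ => ?_
          rw [Finset.mul_sum, Finset.sum_filter]
  have step1 : ∀ σ ∈ P,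
      (⨆ h : H, ∑ i : Fin m, σ i * w ((i : ℕ) + 1) * ℓ ((i : ℕ) + 1) h)
        ≤ ∑ j ∈ Icc 1 m, (w j - w (j - 1)) *
            ⨆ h : H, ∑ i ∈ Finset.univ.filter (fun i : Fin m => j ≤ (i : ℕ) + 1),
              σ i * ℓ ((i : ℕ) + 1) h := by
    intro σ hσ
    apply ciSup_le
    intro h
    rw [key σ h]
    apply Finset.sum_le_sum
    intro j hj
    exact mul_le_mul_of_nonneg_left (le_ciSup (hbdd' σ (hσ1 σ hσ) _) h) (hcnn j hj)
  have hrw : ∑ j ∈ Finset.Icc 1 m, (w j - w (j - 1)) *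
          (((2 : ℝ) ^ m)⁻¹ *
            ∑ σ ∈ P,
              ⨆ h : H, ∑ i ∈ Finset.univ.filter (fun i : Fin m => j ≤ (i : ℕ) + 1),
                σ i * ℓ ((i : ℕ) + 1) h)
      = ((2 : ℝ) ^ m)⁻¹ * ∑ σ ∈ P, ∑ j ∈ Icc 1 m, (w j - w (j - 1)) *
            ⨆ h : H, ∑ i ∈ Finset.univ.filter (fun i : Fin m => j ≤ (i : ℕ) + 1),
              σ i * ℓ ((i : ℕ) + 1) h := by
    simp only [Finset.mul_sum]
    rw [Finset.sum_comm]
    exact Finset.sum_congr rfl fun σ _ => Finset.sum_congr rfl fun j _ => by ring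
  rw [hrw]
  apply mul_le_mul_of_nonneg_left _ (by positivity)
  exact Finset.sum_le_sum step1
end

section
/- Let X_1, X_2 be independent standard Gaussian random variables on ℝ, let β ∈ ℝ, and define h : ℝ² → ℝ by h(w_1, w_2) := E[(X_1 − β·X_1·X_2² − w_1·X_1 − w_2·X_2)²]. Then h(w_1, w_2) = (1 − w_1 − β)² + 2β² + w_2², so h attains its unique minimum at (w_1, w_2) = (1 − β, 0) with minimum value 2β². -/
/-! Expanding the square, `h(w₁, w₂)` is a combination of the mixed moments `E[X₁ⁱ X₂ʲ]`, which
factor as `E[X₁ⁱ] E[X₂ʲ]` by independence. Only `E[X] = 0`, `E[X²] = 1` and `E[X⁴] = 3` enter;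
the fourth moment is the fourth derivative at `0` of the moment generating function
`t ↦ exp (t² / 2)`. -/

open MeasureTheory ProbabilityTheory

/-- The NF objective of the toy example: for independent standard Gaussians
`X₁, X₂` and a linear explanation `g(x) = w₁x₁ + w₂x₂` of the model
`f(x) = x₁ − β·x₁·x₂²`, `h(w₁,w₂) = E[(X₁ − β·X₁·X₂² − w₁·X₁ − w₂·X₂)²]`. -/
noncomputable def toyNF (β w₁ w₂ : ℝ) : ℝ :=
  ∫ q : ℝ × ℝ, (q.1 - β * q.1 * q.2 ^ 2 - w₁ * q.1 - w₂ * q.2) ^ 2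
    ∂((gaussianReal 0 1).prod (gaussianReal 0 1))

open Real
open scoped NNReal

lemma deriv_mul_exp_mul_sq_div_two {p : ℝ → ℝ} (hp : Differentiable ℝ p) (v : ℝ) :
    deriv (fun t ↦ p t * rexp (v * t ^ 2 / 2))
      = fun t ↦ (deriv p t + v * t * p t) * rexp (v * t ^ 2 / 2) := by
  ext t
  have he : HasDerivAt (fun t ↦ rexp (v * t ^ 2 / 2)) (rexp (v * t ^ 2 / 2) * (v * t)) t := by
    convert ((hasDerivAt_pow 2 t).const_mul v).div_const 2 |>.exp using 1
    ring
  exact ((hp t).hasDerivAt.mul he).deriv.trans (by ring)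

lemma iteratedDeriv_four_exp_mul_sq_div_two (v : ℝ) :
    iteratedDeriv 4 (fun t ↦ rexp (v * t ^ 2 / 2))
      = fun t ↦ (3 * v ^ 2 + 6 * v ^ 3 * t ^ 2 + v ^ 4 * t ^ 4) * rexp (v * t ^ 2 / 2) := by
  have h₁ : iteratedDeriv 1 (fun t ↦ rexp (v * t ^ 2 / 2))
      = fun t ↦ (v * t) * rexp (v * t ^ 2 / 2) := by
    rw [iteratedDeriv_one, show (fun t ↦ rexp (v * t ^ 2 / 2)) = fun t ↦ 1 * rexp (v * t ^ 2 / 2)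
      by simp, deriv_mul_exp_mul_sq_div_two (by fun_prop)]
    simp
  have h₂ : iteratedDeriv 2 (fun t ↦ rexp (v * t ^ 2 / 2))
      = fun t ↦ (v + v ^ 2 * t ^ 2) * rexp (v * t ^ 2 / 2) := by
    rw [iteratedDeriv_succ, h₁, deriv_mul_exp_mul_sq_div_two (by fun_prop)]
    ext t; simp (disch := fun_prop); ring
  have h₃ : iteratedDeriv 3 (fun t ↦ rexp (v * t ^ 2 / 2))
      = fun t ↦ (3 * v ^ 2 * t + v ^ 3 * t ^ 3) * rexp (v * t ^ 2 / 2) := by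
    rw [iteratedDeriv_succ, h₂, deriv_mul_exp_mul_sq_div_two (by fun_prop)]
    ext t; simp (disch := fun_prop); ring
  rw [iteratedDeriv_succ, h₃, deriv_mul_exp_mul_sq_div_two (by fun_prop)]
  ext t; simp (disch := fun_prop); ring

section GaussianMoments

variable {μ : ℝ} {v : ℝ≥0}

lemma integrable_pow_gaussianReal (n : ℕ) :
    Integrable (fun x : ℝ ↦ x ^ n) (gaussianReal μ v) :=
  integrable_pow_of_mem_interior_integrableExpSet (by simp) n

lemma integral_pow_gaussianReal_eq_iteratedDeriv (n : ℕ) :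
    ∫ x, x ^ n ∂gaussianReal 0 v = iteratedDeriv n (fun t ↦ rexp (v * t ^ 2 / 2)) 0 := by
  have h := iteratedDeriv_mgf_zero (X := fun x : ℝ ↦ x) (μ := gaussianReal 0 v) (by simp) n
  rw [mgf_fun_id_gaussianReal] at h
  simpa using h.symm

lemma integral_sq_gaussianReal : ∫ x, x ^ 2 ∂gaussianReal 0 v = v := by
  have h := variance_fun_id_gaussianReal (μ := 0) (v := v)
  rw [variance_eq_integral measurable_id'.aemeasurable] at h
  simpa using h

lemma integral_pow_four_gaussianReal : ∫ x, x ^ 4 ∂gaussianReal 0 v = 3 * v ^ 2 := by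
  rw [integral_pow_gaussianReal_eq_iteratedDeriv, iteratedDeriv_four_exp_mul_sq_div_two]
  simp

end GaussianMoments

lemma integrable_pow_mul_pow_gaussianReal_prod {μ₁ μ₂ : ℝ} {v₁ v₂ : ℝ≥0} (i j : ℕ) :
    Integrable (fun q : ℝ × ℝ ↦ q.1 ^ i * q.2 ^ j)
      ((gaussianReal μ₁ v₁).prod (gaussianReal μ₂ v₂)) :=
  (integrable_pow_gaussianReal i).mul_prod (integrable_pow_gaussianReal j)

lemma integral_pow_mul_pow_prod (μ ν : Measure ℝ) [SFinite μ] [SFinite ν] (i j : ℕ) :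
    ∫ q : ℝ × ℝ, q.1 ^ i * q.2 ^ j ∂(μ.prod ν) = (∫ x, x ^ i ∂μ) * ∫ x, x ^ j ∂ν :=
  integral_prod_mul _ _

theorem toyNF_eq (β w₁ w₂ : ℝ) :
    toyNF β w₁ w₂ = (1 - w₁ - β) ^ 2 + 2 * β ^ 2 + w₂ ^ 2 := by
  have expand : toyNF β w₁ w₂ = ∫ q : ℝ × ℝ,
      ((1 - w₁) ^ 2 * (q.1 ^ 2 * q.2 ^ 0) + β ^ 2 * (q.1 ^ 2 * q.2 ^ 4)
        + w₂ ^ 2 * (q.1 ^ 0 * q.2 ^ 2) - 2 * (1 - w₁) * β * (q.1 ^ 2 * q.2 ^ 2)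
        - 2 * (1 - w₁) * w₂ * (q.1 ^ 1 * q.2 ^ 1) + 2 * β * w₂ * (q.1 ^ 1 * q.2 ^ 3))
      ∂((gaussianReal 0 1).prod (gaussianReal 0 1)) := by
    unfold toyNF
    congr 1 with q
    ring
  -- `fun_prop` reads the integrability side conditions of the linearity lemmas off this.
  have hmonomial :=
    integrable_pow_mul_pow_gaussianReal_prod (μ₁ := 0) (μ₂ := 0) (v₁ := 1) (v₂ := 1)
  rw [expand]
  simp (disch := fun_prop) only [integral_add, integral_sub, integral_const_mul,
    integral_pow_mul_pow_prod]
  simp only [pow_zero, pow_one, integral_const, probReal_univ, smul_eq_mul, mul_one,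
    integral_id_gaussianReal, integral_sq_gaussianReal, integral_pow_four_gaussianReal,
    NNReal.coe_one]
  ring

/-- **Toy example: the NF-minimizing linear coefficient is `1 − β`.**
`h(w₁,w₂) = (1 − w₁ − β)² + 2β² + w₂²`, so `h` attains its unique minimum at
`(w₁,w₂) = (1 − β, 0)` with minimum value `2β²`. -/
theorem toy_example_nf_minimizer (β : ℝ) :
    (∀ w₁ w₂ : ℝ, toyNF β w₁ w₂ = (1 - w₁ - β) ^ 2 + 2 * β ^ 2 + w₂ ^ 2) ∧
    (∀ w₁ w₂ : ℝ, toyNF β (1 - β) 0 ≤ toyNF β w₁ w₂ ∧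
      (toyNF β w₁ w₂ = toyNF β (1 - β) 0 → w₁ = 1 - β ∧ w₂ = 0)) ∧
    toyNF β (1 - β) 0 = 2 * β ^ 2 := by
  have hmin : toyNF β (1 - β) 0 = 2 * β ^ 2 := by rw [toyNF_eq]; ring
  refine ⟨toyNF_eq β, fun w₁ w₂ ↦ ?_, hmin⟩
  rw [hmin, toyNF_eq]
  refine ⟨by linarith [sq_nonneg (1 - w₁ - β), sq_nonneg w₂], fun h ↦ ?_⟩
  have hzero : (1 - w₁ - β) ^ 2 + w₂ ^ 2 = 0 := by linarith
  obtain ⟨h₁, h₂⟩ := (add_eq_zero_iff_of_nonneg (sq_nonneg _) (sq_nonneg _)).1 hzero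
  exact ⟨by linarith [pow_eq_zero_iff two_ne_zero |>.1 h₁], pow_eq_zero_iff two_ne_zero |>.1 h₂⟩
end
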